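/- arXiv:2410.04846 — 4 statements merged into one kernel-verified Lean document; each statement's English description precedes it below -/
import Mathlib

section
/- For j ∈ ℤ let ψ_j(x,y) = e^{πi x y 2^{-2j}} χ^H(x) χ^H(y), where χ^H is the Haar wavelet. Then the family {D_{2^j} (T^t_{(k,l)})^{2^{-2j}} ψ_j : k, l, j ∈ ℤ} is an orthonormal system in L²(ℝ²): ⟨D_{2^j}(T^t_{(k,l)})^{2^{-2j}} ψ_j, D_{2^{j'}}(T^t_{(k',l')})^{2^{-2j'}} ψ_{j'}⟩ equals 1 if (j,k,l) = (j',k',l') and 0 otherwise. -/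
/-!
After the dilation, every member of the family carries the same chirp `e^{πixy}`, which cancels
in the inner product; what remains is a product of an integral in `x` and an integral in `y`.
The `x`-integral is the inner product of the dyadic Haar functions `χ^H(2^j x - k)` and
`χ^H(2^{j'} x - k')`, which vanishes unless `(j, k) = (j', k')`. In that case the two
modulations in `y` coincide and cancel too, and the `y`-integral is again a Haar inner product.
-/

open MeasureTheory Complex

noncomputable section

/-- The `λ`-twisted translation `(T^t_{(k,l)})^λ f (x,y) = e^{πiλ(xl - yk)} f(x-k, y-l)`. -/
def twistedTranslate (lam : ℝ) (k l : ℤ) (f : ℝ × ℝ → ℂ) : ℝ × ℝ → ℂ :=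
  fun p => Complex.exp ((↑(Real.pi * lam * (p.1 * l - p.2 * k)) : ℂ) * Complex.I) *
    f (p.1 - k, p.2 - l)

/-- The dilation `D_a f (x,y) = a f(ax, ay)`. -/
def dilate (a : ℝ) (f : ℝ × ℝ → ℂ) : ℝ × ℝ → ℂ :=
  fun p => (a : ℂ) * f (a * p.1, a * p.2)

/-- The kernel `K^λ_g(ξ,η) = ∫_ℝ g(x, η-ξ) e^{πiλx(η+ξ)} dx` of the Weyl transform `W_λ(g)`. -/
def weylKernel (lam : ℝ) (g : ℝ × ℝ → ℂ) (ξ η : ℝ) : ℂ :=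
  ∫ x : ℝ, g (x, η - ξ) * Complex.exp ((↑(Real.pi * lam * x * (η + ξ)) : ℂ) * Complex.I)

/-- The Haar wavelet on `ℝ`. -/
def haarWavelet (x : ℝ) : ℂ :=
  if 0 ≤ x ∧ x ≤ 1 / 2 then 1 else if 1 / 2 < x ∧ x ≤ 1 then -1 else 0

/-- `ψ_j(x,y) = e^{πixy2^{-2j}} χ^H(x) χ^H(y)`. -/
def psiHaar (j : ℤ) : ℝ × ℝ → ℂ :=
  fun p => Complex.exp ((↑(Real.pi * p.1 * p.2 * (2 : ℝ) ^ (-(2 * j))) : ℂ) * Complex.I) *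
    haarWavelet p.1 * haarWavelet p.2

open Set ComplexConjugate
open scoped Real

lemma integral_comp_mul_sub {E : Type*} [NormedAddCommGroup E] [NormedSpace ℝ E]
    (F : ℝ → E) (a b : ℝ) : ∫ x, F (a * x - b) = |a⁻¹| • ∫ x, F x := by
  rw [Measure.integral_comp_mul_left (fun x => F (x - b)), integral_sub_right_eq_self]

lemma mul_mul_conj_mul_of_norm_eq_one {e : ℂ} (he : ‖e‖ = 1) (a b : ℂ) :
    e * a * conj (e * b) = a * conj b := by
  have : e * conj e = 1 := by rw [mul_conj', he]; norm_num
  rw [map_mul]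
  linear_combination a * conj b * this

lemma integral_prod_phase_mul_conj {α β : Type*} [MeasurableSpace α] [MeasurableSpace β]
    {μ : Measure α} {ν : Measure β} [SFinite μ] [SFinite ν] {φ : α × β → ℂ}
    (hφ : ∀ p, ‖φ p‖ = 1) (c c' : ℂ) (u u' : α → ℂ) (v v' : β → ℂ) :
    ∫ p, c * φ p * u p.1 * v p.2 * conj (c' * φ p * u' p.1 * v' p.2) ∂μ.prod ν =
      c * conj c' * ((∫ x, u x * conj (u' x) ∂μ) * ∫ y, v y * conj (v' y) ∂ν) := by
  have h : ∀ p : α × β, c * φ p * u p.1 * v p.2 * conj (c' * φ p * u' p.1 * v' p.2) =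
      c * conj c' * (u p.1 * conj (u' p.1) * (v p.2 * conj (v' p.2))) := by
    intro p
    have := mul_mul_conj_mul_of_norm_eq_one (hφ p) (c * u p.1 * v p.2) (c' * u' p.1 * v' p.2)
    simp only [map_mul] at this ⊢
    linear_combination this
  simp only [h, integral_const_mul]
  rw [integral_prod_mul (fun x => u x * conj (u' x)) (fun y => v y * conj (v' y))]

lemma conj_haarWavelet (x : ℝ) : conj (haarWavelet x) = haarWavelet x := by
  unfold haarWavelet; split_ifs <;> simp

lemma measurable_haarWavelet : Measurable haarWavelet :=
  Measurable.ite measurableSet_Icc measurable_const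
    (Measurable.ite measurableSet_Ioc measurable_const measurable_const)

lemma norm_haarWavelet_le (x : ℝ) : ‖haarWavelet x‖ ≤ 1 := by
  unfold haarWavelet; split_ifs <;> simp

lemma mem_Icc_of_haarWavelet_ne_zero {x : ℝ} (hx : haarWavelet x ≠ 0) : x ∈ Icc 0 1 := by
  unfold haarWavelet at hx
  split_ifs at hx with h₁ h₂
  · exact ⟨h₁.1, h₁.2.trans (by norm_num)⟩
  · exact ⟨(by norm_num : (0 : ℝ) ≤ 1 / 2).trans h₂.1.le, h₂.2⟩
  · exact absurd rfl hx

lemma haarWavelet_ae_eq : ∀ᵐ x ∂volume,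
    haarWavelet x = (Ioc 0 (1 / 2)).indicator 1 x - (Ioc (1 / 2) 1).indicator 1 x := by
  filter_upwards [volume.ae_ne 0] with x hx
  simp only [haarWavelet, indicator, mem_Ioc, Pi.one_apply]
  split_ifs <;> grind

lemma integrableOn_haarWavelet_comp (a c : ℝ) {s : Set ℝ} (hs : volume s ≠ ⊤) :
    IntegrableOn (fun x => haarWavelet (a * x + c)) s :=
  Measure.integrableOn_of_bounded hs
    (measurable_haarWavelet.comp (by fun_prop)).aestronglyMeasurable
    (ae_of_all _ fun _ => norm_haarWavelet_le _)

lemma integral_mul_haarWavelet {g : ℝ → ℂ} (hg₀ : IntegrableOn g (Ioc 0 (1 / 2)))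
    (hg₁ : IntegrableOn g (Ioc (1 / 2) 1)) :
    ∫ x, g x * haarWavelet x = (∫ x in (0)..1 / 2, g x) - ∫ x in (1 / 2)..1, g x := by
  have h : (fun x => g x * haarWavelet x)
      =ᵐ[volume] fun x => (Ioc 0 (1 / 2)).indicator g x - (Ioc (1 / 2) 1).indicator g x := by
    filter_upwards [haarWavelet_ae_eq] with x hx
    simp only [hx, indicator, Pi.one_apply]
    split_ifs <;> ring
  rw [integral_congr_ae h, integral_sub (hg₀.integrable_indicator measurableSet_Ioc)
    (hg₁.integrable_indicator measurableSet_Ioc), integral_indicator measurableSet_Ioc,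
    integral_indicator measurableSet_Ioc, intervalIntegral.integral_of_le (by norm_num),
    intervalIntegral.integral_of_le (by norm_num)]

lemma intervalIntegral_haarWavelet_intCast (m n : ℤ) :
    ∫ x in (m : ℝ)..n, haarWavelet x = 0 := by
  wlog hmn : m ≤ n generalizing m n
  · rw [intervalIntegral.integral_symm, this n m (by omega), neg_zero]
  rw [intervalIntegral.integral_of_le (by exact_mod_cast hmn),
    setIntegral_congr_ae measurableSet_Ioc (haarWavelet_ae_eq.mono fun x hx _ => hx),
    integral_sub ((integrable_const 1).indicator measurableSet_Ioc)
      ((integrable_const 1).indicator measurableSet_Ioc),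
    setIntegral_indicator measurableSet_Ioc, setIntegral_indicator measurableSet_Ioc,
    Ioc_inter_Ioc, Ioc_inter_Ioc]
  simp only [Pi.one_apply, setIntegral_const, Real.volume_real_Ioc, real_smul, mul_one,
    sub_eq_zero, ofReal_inj]
  obtain (h | h) | ⟨hm, hn⟩ : ((n : ℝ) ≤ 0 ∨ 1 ≤ (m : ℝ)) ∨ ((m : ℝ) ≤ 0 ∧ 1 ≤ (n : ℝ)) := by
    exact_mod_cast (by omega : (n ≤ 0 ∨ 1 ≤ m) ∨ (m ≤ 0 ∧ 1 ≤ n))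
  · rw [max_eq_right (by linarith [min_le_left (n : ℝ) (1 / 2), le_max_right (m : ℝ) 0]),
      max_eq_right (by linarith [min_le_left (n : ℝ) 1, le_max_right (m : ℝ) (1 / 2)])]
  · rw [max_eq_right (by linarith [min_le_right (n : ℝ) (1 / 2), le_max_left (m : ℝ) 0]),
      max_eq_right (by linarith [min_le_right (n : ℝ) 1, le_max_left (m : ℝ) (1 / 2)])]
  · rw [max_eq_right hm, min_eq_right (by linarith : (1 / 2 : ℝ) ≤ n), min_eq_right hn,
      max_eq_right (by linarith : (m : ℝ) ≤ 1 / 2)]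
    norm_num

lemma integral_haarWavelet_mul_self : ∫ x, haarWavelet x * haarWavelet x = 1 := by
  have h : ∀ x, haarWavelet x * haarWavelet x = (Icc (0 : ℝ) 1).indicator (fun _ => 1) x := by
    intro x
    simp only [haarWavelet, indicator, mem_Icc]
    split_ifs <;> (try norm_num) <;> grind
  simp [h, integral_indicator_const _ measurableSet_Icc]

lemma integral_haarWavelet_mul_shift {d : ℤ} (hd : d ≠ 0) :
    ∫ x, haarWavelet x * haarWavelet (x - d) = 0 := by
  refine integral_eq_zero_of_ae (measure_mono_null (t := Icc 0 1 ∩ Icc (d : ℝ) (d + 1)) ?_ ?_)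
  · intro x hx
    obtain ⟨h₀, h₁⟩ := mul_ne_zero_iff.1 hx
    obtain ⟨h₂, h₃⟩ := mem_Icc_of_haarWavelet_ne_zero h₁
    exact ⟨mem_Icc_of_haarWavelet_ne_zero h₀, by linarith, by linarith⟩
  · rw [Icc_inter_Icc, Real.volume_Icc, ENNReal.ofReal_eq_zero]
    rcases (by omega : d ≤ -1 ∨ 1 ≤ d) with h | h
    · have : (d : ℝ) ≤ -1 := by exact_mod_cast h
      linarith [min_le_right (1 : ℝ) (d + 1), le_max_left (0 : ℝ) d]
    · have : (1 : ℝ) ≤ d := by exact_mod_cast h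
      linarith [min_le_left (1 : ℝ) (d + 1), le_max_right (0 : ℝ) d]

lemma integral_haarWavelet_mul_sub_mul (a : ℝ) (k k' : ℤ) :
    ∫ x, haarWavelet (a * x - k) * haarWavelet (a * x - k') =
      if k = k' then ((|a⁻¹| : ℝ) : ℂ) else 0 := by
  set F : ℝ → ℂ := fun u => haarWavelet u * haarWavelet (u - (k' - k : ℤ))
  have hF : ∀ x, haarWavelet (a * x - k) * haarWavelet (a * x - k') = F (a * x - k) := by
    intro x; simp only [F]; push_cast; ring_nf
  simp only [hF, integral_comp_mul_sub F, F]
  split_ifs with hk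
  · simp [hk, integral_haarWavelet_mul_self]
  · rw [integral_haarWavelet_mul_shift (sub_ne_zero.2 (Ne.symm hk)), smul_zero]

-- On either half of `[0, 1]`, `x ↦ 2 ^ (n + 1) * x + c` sweeps an interval with integer endpoints.
lemma integral_haarWavelet_two_pow_succ_mul (n : ℕ) (c : ℤ) :
    ∫ x, haarWavelet (2 ^ (n + 1) * x + c) * haarWavelet x = 0 := by
  have hfin {a b : ℝ} :=
    integrableOn_haarWavelet_comp (2 ^ (n + 1)) c (measure_Ioc_lt_top (a := a) (b := b)).ne
  rw [integral_mul_haarWavelet hfin hfin, intervalIntegral.integral_comp_mul_add _ (by positivity),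
    intervalIntegral.integral_comp_mul_add _ (by positivity)]
  have e₀ : (2 : ℝ) ^ (n + 1) * 0 + c = (c : ℤ) := by ring
  have e₁ : (2 : ℝ) ^ (n + 1) * (1 / 2) + c = (c + 2 ^ n : ℤ) := by push_cast; ring
  have e₂ : (2 : ℝ) ^ (n + 1) * 1 + c = (c + 2 ^ (n + 1) : ℤ) := by push_cast; ring
  rw [e₀, e₁, e₂, intervalIntegral_haarWavelet_intCast, intervalIntegral_haarWavelet_intCast,
    smul_zero, sub_zero]

def haarDyadic (j k : ℤ) (x : ℝ) : ℂ :=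
  haarWavelet (2 ^ j * x - k)

lemma integral_haarDyadic_mul_of_lt {j j' : ℤ} (h : j' < j) (k k' : ℤ) :
    ∫ x, haarDyadic j k x * haarDyadic j' k' x = 0 := by
  obtain ⟨n, rfl⟩ : ∃ n : ℕ, j = j' + (n + 1 : ℕ) := ⟨(j - j' - 1).toNat, by omega⟩
  set F : ℝ → ℂ := fun u =>
    haarWavelet (2 ^ (n + 1) * u + (2 ^ (n + 1) * k' - k : ℤ)) * haarWavelet u
  have hF : ∀ x, haarDyadic (j' + (n + 1 : ℕ)) k x * haarDyadic j' k' x = F (2 ^ j' * x - k') := by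
    intro x
    simp only [haarDyadic, F, zpow_add₀ (two_ne_zero : (2 : ℝ) ≠ 0), zpow_natCast]
    push_cast; ring_nf
  simp only [hF, integral_comp_mul_sub F, F, integral_haarWavelet_two_pow_succ_mul, smul_zero]

theorem integral_haarDyadic_mul_conj (j j' k k' : ℤ) :
    ∫ x, haarDyadic j k x * conj (haarDyadic j' k' x) =
      if (j, k) = (j', k') then (2 ^ j)⁻¹ else 0 := by
  have hconj : ∀ x, conj (haarDyadic j' k' x) = haarDyadic j' k' x := fun _ => conj_haarWavelet _
  simp only [hconj, Prod.mk.injEq]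
  rcases lt_trichotomy j j' with h | rfl | h
  · simp only [h.ne, false_and, if_false]
    simpa only [mul_comm] using integral_haarDyadic_mul_of_lt h k' k
  · simp only [haarDyadic]
    rw [integral_haarWavelet_mul_sub_mul, abs_of_pos (by positivity)]
    push_cast
    simp only [true_and]
  · simp only [integral_haarDyadic_mul_of_lt h, h.ne', false_and, if_false]

lemma dilate_twistedTranslate_psiHaar (j k l : ℤ) (p : ℝ × ℝ) :
    dilate ((2 : ℝ) ^ j) (twistedTranslate ((2 : ℝ) ^ (-(2 * j))) k l (psiHaar j)) p =
      ((2 : ℝ) ^ j : ℝ) * exp (↑(π * (2 : ℝ) ^ (-(2 * j)) * k * l) * I) *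
        exp (↑(π * p.1 * p.2) * I) * haarDyadic j k p.1 *
        (exp (↑(-(2 * π * (2 : ℝ) ^ (-j) * k * p.2)) * I) * haarDyadic j l p.2) := by
  have h₁ : (2 : ℝ) ^ (-(2 * j)) * 2 ^ j * 2 ^ j = 1 := by
    rw [← zpow_add₀ two_ne_zero, ← zpow_add₀ two_ne_zero]; ring_nf; simp
  have h₂ : (2 : ℝ) ^ (-(2 * j)) * 2 ^ j = 2 ^ (-j) := by
    rw [← zpow_add₀ two_ne_zero]; ring_nf
  have hphase : π * 2 ^ (-(2 * j)) * (2 ^ j * p.1 * l - 2 ^ j * p.2 * k) +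
      π * (2 ^ j * p.1 - k) * (2 ^ j * p.2 - l) * 2 ^ (-(2 * j)) =
      π * 2 ^ (-(2 * j)) * k * l + π * p.1 * p.2 + -(2 * π * 2 ^ (-j) * k * p.2) := by
    linear_combination (π * p.1 * p.2) * h₁ - (2 * π * k * p.2) * h₂
  have hexp : exp (↑(π * 2 ^ (-(2 * j)) * (2 ^ j * p.1 * l - 2 ^ j * p.2 * k)) * I) *
      exp (↑(π * (2 ^ j * p.1 - k) * (2 ^ j * p.2 - l) * 2 ^ (-(2 * j))) * I) =
      exp (↑(π * 2 ^ (-(2 * j)) * k * l) * I) * exp (↑(π * p.1 * p.2) * I) *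
        exp (↑(-(2 * π * 2 ^ (-j) * k * p.2)) * I) := by
    simp only [← exp_add, ← add_mul, ← ofReal_add, hphase]
  simp only [dilate, twistedTranslate, psiHaar, haarDyadic]
  linear_combination (↑((2 : ℝ) ^ j) * haarWavelet (2 ^ j * p.1 - k) *
    haarWavelet (2 ^ j * p.2 - l)) * hexp

/-- The family `{D_{2^j} (T^t_{(k,l)})^{2^{-2j}} ψ_j : k, l, j ∈ ℤ}` is an
orthonormal system in `L²(ℝ²)`. -/
theorem statement_2 (j k l j' k' l' : ℤ) :
    (∫ p : ℝ × ℝ,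
        dilate ((2 : ℝ) ^ j) (twistedTranslate ((2 : ℝ) ^ (-(2 * j))) k l (psiHaar j)) p *
          (starRingEnd ℂ)
            (dilate ((2 : ℝ) ^ j') (twistedTranslate ((2 : ℝ) ^ (-(2 * j'))) k' l'
              (psiHaar j')) p))
      = if (j, k, l) = (j', k', l') then 1 else 0 := by
  simp only [dilate_twistedTranslate_psiHaar]
  rw [Measure.volume_eq_prod, integral_prod_phase_mul_conj (fun p => norm_exp_ofReal_mul_I _)
    (v := fun y => exp (↑(-(2 * π * (2 : ℝ) ^ (-j) * k * y)) * I) * haarDyadic j l y)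
    (v' := fun y => exp (↑(-(2 * π * (2 : ℝ) ^ (-j') * k' * y)) * I) * haarDyadic j' l' y),
    integral_haarDyadic_mul_conj]
  by_cases hjk : (j, k) = (j', k')
  · obtain ⟨rfl, rfl⟩ := Prod.mk.inj hjk
    simp only [if_true, mul_mul_conj_mul_of_norm_eq_one (norm_exp_ofReal_mul_I _),
      integral_haarDyadic_mul_conj]
    by_cases hl : l = l'
    · subst hl
      rw [if_pos rfl, if_pos rfl, mul_conj', norm_mul, norm_exp_ofReal_mul_I, mul_one,
        norm_real, Real.norm_of_nonneg (by positivity)]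
      push_cast
      field_simp
    · simp [hl]
  · rw [if_neg hjk, if_neg fun h => hjk (by simp_all), zero_mul, mul_zero]
end
end

section
/- Let ψ ∈ L²(ℝ²), let j ≥ 0 be an integer, and let k, l, k', l' ∈ ℤ. Then T^t_{(k',l')} D_{2^j} (T^t_{(k,l)})^{2^{-2j}} ψ = e^{-πi 2^{-2j} (2^j k' l − 2^j l' k)} D_{2^j} (T^t_{(2^j k' + k, 2^j l' + l)})^{2^{-2j}} ψ in L²(ℝ²). -/
open MeasureTheory Complex

noncomputable section

theorem zpow_neg_two_mul_mul_pow_sq {K : Type*} [DivisionRing K] {b : K} (hb : b ≠ 0) (j : ℕ) :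
    b ^ (-(2 * (j : ℤ))) * (b ^ j) ^ 2 = 1 := by
  rw [← zpow_natCast, ← zpow_natCast, ← zpow_mul, ← zpow_add₀ hb]
  simp [mul_comm]

/-- Since `lam * a ^ 2 = 1`, the phase of `D_a (T^t_{(k,l)})^lam` is that of the twisted translation
by `(k / a, l / a)`, so composing with `T^t_{(k',l')}` costs only the usual constant cocycle phase. -/
theorem twistedTranslate_one_dilate_twistedTranslate {lam a : ℝ} (h : lam * a ^ 2 = 1)
    (f : ℝ × ℝ → ℂ) (k l k' l' : ℤ) {m n : ℤ} (hm : (m : ℝ) = a * k' + k)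
    (hn : (n : ℝ) = a * l' + l) :
    twistedTranslate 1 k' l' (dilate a (twistedTranslate lam k l f)) =
      fun p => Complex.exp (-(↑(Real.pi * lam * (a * k' * l - a * l' * k)) : ℂ) * Complex.I) *
        dilate a (twistedTranslate lam m n f) p := by
  funext ⟨x, y⟩
  have hshift : (a * (x - k') - k, a * (y - l') - l) = (a * x - m, a * y - n) := by
    rw [hm, hn]
    ext <;> ring
  have hphase : Real.pi * 1 * (x * l' - y * k') +
      Real.pi * lam * (a * (x - k') * l - a * (y - l') * k) =
      -(Real.pi * lam * (a * k' * l - a * l' * k)) + Real.pi * lam * (a * x * n - a * y * m) := by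
    rw [hm, hn]
    linear_combination (-(Real.pi * (x * l' - y * k'))) * h
  have hexp : Complex.exp (↑(Real.pi * 1 * (x * l' - y * k')) * Complex.I) *
        Complex.exp (↑(Real.pi * lam * (a * (x - k') * l - a * (y - l') * k)) * Complex.I) =
      Complex.exp (-(↑(Real.pi * lam * (a * k' * l - a * l' * k)) : ℂ) * Complex.I) *
        Complex.exp (↑(Real.pi * lam * (a * x * n - a * y * m)) * Complex.I) := by
    rw [← Complex.exp_add, ← Complex.exp_add, ← Complex.ofReal_neg, ← add_mul, ← add_mul,
      ← Complex.ofReal_add, ← Complex.ofReal_add, hphase]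
  simp only [twistedTranslate, dilate, hshift]
  linear_combination (a * f (a * x - m, a * y - n)) * hexp

theorem statement_5_general (ψ : ℝ × ℝ → ℂ)
    (j : ℕ) (k l k' l' : ℤ) :
    twistedTranslate 1 k' l'
        (dilate ((2 : ℝ) ^ j) (twistedTranslate ((2 : ℝ) ^ (-(2 * (j : ℤ)))) k l ψ)) =
      fun p =>
        Complex.exp (-(↑(Real.pi * (2 : ℝ) ^ (-(2 * (j : ℤ))) *
            ((2 : ℝ) ^ (j : ℕ) * k' * l - (2 : ℝ) ^ (j : ℕ) * l' * k)) : ℂ) * Complex.I) *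
          dilate ((2 : ℝ) ^ j)
            (twistedTranslate ((2 : ℝ) ^ (-(2 * (j : ℤ)))) (2 ^ j * k' + k) (2 ^ j * l' + l) ψ)
            p := by
  exact twistedTranslate_one_dilate_twistedTranslate
    (zpow_neg_two_mul_mul_pow_sq two_ne_zero j) ψ k l k' l' (by push_cast; ring) (by push_cast; ring)

/-- For `ψ ∈ L²(ℝ²)`, `j ≥ 0` and `k, l, k', l' ∈ ℤ`,
`T^t_{(k',l')} D_{2^j} (T^t_{(k,l)})^{2^{-2j}} ψ
  = e^{-πi2^{-2j}(2^j k' l - 2^j l' k)} D_{2^j} (T^t_{(2^j k' + k, 2^j l' + l)})^{2^{-2j}} ψ`. -/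
theorem statement_5 (ψ : ℝ × ℝ → ℂ) (hψ : MemLp ψ 2 (volume : Measure (ℝ × ℝ)))
    (j : ℕ) (k l k' l' : ℤ) :
    twistedTranslate 1 k' l'
        (dilate ((2 : ℝ) ^ j) (twistedTranslate ((2 : ℝ) ^ (-(2 * (j : ℤ)))) k l ψ)) =
      fun p =>
        Complex.exp (-(↑(Real.pi * (2 : ℝ) ^ (-(2 * (j : ℤ))) *
            ((2 : ℝ) ^ (j : ℕ) * k' * l - (2 : ℝ) ^ (j : ℕ) * l' * k)) : ℂ) * Complex.I) *
          dilate ((2 : ℝ) ^ j)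
            (twistedTranslate ((2 : ℝ) ^ (-(2 * (j : ℤ)))) (2 ^ j * k' + k) (2 ^ j * l' + l) ψ)
            p :=
  statement_5_general ψ j k l k' l'
end
end

section
/- Let ψ ∈ L¹(ℝ²) ∩ L²(ℝ²), let j ≥ 0 be an integer, and let k, l ∈ ℤ. Then for a.e. η ∈ ℝ, ∫_ℝ |K_{D_{2^j} (T^t_{(k,l)})^{2^{-2j}} ψ}(ξ, η)|² dξ = ∫_ℝ |K^{2^{-2j}}_ψ(2^j ξ + l, 2^j η)|² dξ = 2^{-j} ∫_ℝ |K^{2^{-2j}}_ψ(ξ, 2^j η)|² dξ. -/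
/-!
Substituting `x ↦ a x - k` in the kernel integral of `D_a (T^t_{(k,l)})^λ ψ` turns it, when
`λ a² = 1`, into a unimodular constant times `K^λ_ψ(a ξ + l, a η)`.
The second equality is the affine change of variables `ξ ↦ a ξ + l`, whose Jacobian is
`|a|⁻¹ = 2^{-j}`.
-/

open MeasureTheory Complex

noncomputable section

lemma integral_comp_mul_add_real {F : Type*} [NormedAddCommGroup F] [NormedSpace ℝ F]
    (g : ℝ → F) (a b : ℝ) :
    ∫ x : ℝ, g (a * x + b) = |a⁻¹| • ∫ x : ℝ, g x := by
  rw [Measure.integral_comp_mul_left (fun y => g (y + b)) a, integral_add_right_eq_self g b]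

/-- The twist of `T^λ` pulled back by `D_a`, times the phase of `K¹`, is a constant phase times
the phase of `K^λ` after the substitution; the quadratic terms in `x` cancel since `λ a² = 1`. -/
lemma twistedTranslate_phase_mul_weylKernel_phase {lam a : ℝ} (hla : lam * a ^ 2 = 1)
    (k l : ℤ) (x ξ η : ℝ) :
    Complex.exp ((↑(Real.pi * lam * (a * x * l - a * (η - ξ) * k)) : ℂ) * Complex.I) *
        Complex.exp ((↑(Real.pi * 1 * x * (η + ξ)) : ℂ) * Complex.I)
      = Complex.exp ((↑(Real.pi * lam * (k * l + 2 * a * ξ * k)) : ℂ) * Complex.I) *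
        Complex.exp ((↑(Real.pi * lam * (a * x - k) * (a * η + (a * ξ + l))) : ℂ) * Complex.I) := by
  rw [← Complex.exp_add, ← Complex.exp_add, ← add_mul, ← add_mul,
    ← Complex.ofReal_add, ← Complex.ofReal_add]
  congr 2
  rw [Complex.ofReal_inj]
  linear_combination (-(Real.pi * x * (η + ξ))) * hla

lemma weylKernel_dilate_twistedTranslate {lam a : ℝ} (hla : lam * a ^ 2 = 1)
    (ψ : ℝ × ℝ → ℂ) (k l : ℤ) (ξ η : ℝ) :
    weylKernel 1 (dilate a (twistedTranslate lam k l ψ)) ξ η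
      = ((a * |a⁻¹| : ℝ) : ℂ) *
          Complex.exp ((↑(Real.pi * lam * (k * l + 2 * a * ξ * k)) : ℂ) * Complex.I) *
          weylKernel lam ψ (a * ξ + l) (a * η) := by
  set F : ℝ → ℂ := fun u => ψ (u, a * η - (a * ξ + l)) *
    Complex.exp ((↑(Real.pi * lam * u * (a * η + (a * ξ + l))) : ℂ) * Complex.I)
  have hintegrand : ∀ x : ℝ,
      dilate a (twistedTranslate lam k l ψ) (x, η - ξ) *
          Complex.exp ((↑(Real.pi * 1 * x * (η + ξ)) : ℂ) * Complex.I)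
        = (a : ℂ) * Complex.exp ((↑(Real.pi * lam * (k * l + 2 * a * ξ * k)) : ℂ) * Complex.I) *
            F (a * x + (-k : ℝ)) := by
    intro x
    have hy : a * η - (a * ξ + l) = a * (η - ξ) - l := by ring
    simp only [dilate, twistedTranslate, F, hy, ← sub_eq_add_neg]
    linear_combination ((a : ℂ) * ψ (a * x - k, a * (η - ξ) - l)) *
      twistedTranslate_phase_mul_weylKernel_phase hla k l x ξ η
  have hK : weylKernel lam ψ (a * ξ + l) (a * η) = ∫ u, F u := rfl
  rw [weylKernel, funext hintegrand, integral_const_mul, integral_comp_mul_add_real,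
    Complex.real_smul, hK, Complex.ofReal_mul a |a⁻¹|]
  ring

lemma norm_weylKernel_dilate_twistedTranslate {lam a : ℝ} (hla : lam * a ^ 2 = 1)
    (ψ : ℝ × ℝ → ℂ) (k l : ℤ) (ξ η : ℝ) :
    ‖weylKernel 1 (dilate a (twistedTranslate lam k l ψ)) ξ η‖
      = ‖weylKernel lam ψ (a * ξ + l) (a * η)‖ := by
  have ha : a ≠ 0 := by
    rintro rfl
    simp at hla
  have hphase : ‖Complex.exp ((↑(Real.pi * lam * (k * l + 2 * a * ξ * k)) : ℂ) * Complex.I)‖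
      = 1 := Complex.norm_exp_ofReal_mul_I _
  have hscale : ‖((a * |a⁻¹| : ℝ) : ℂ)‖ = 1 := by
    rw [Complex.norm_real, Real.norm_eq_abs, abs_mul, abs_abs, ← abs_mul, mul_inv_cancel₀ ha,
      abs_one]
  rw [weylKernel_dilate_twistedTranslate hla, norm_mul, norm_mul, hphase, hscale, one_mul,
    one_mul]

theorem statement_11_general (ψ : ℝ × ℝ → ℂ) (j : ℕ) (k l : ℤ) :
    ∀ᵐ η : ℝ,
      (∫ ξ : ℝ, ‖weylKernel 1
          (dilate ((2 : ℝ) ^ j) (twistedTranslate ((2 : ℝ) ^ (-(2 * (j : ℤ)))) k l ψ)) ξ η‖ ^ 2)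
        = (∫ ξ : ℝ, ‖weylKernel ((2 : ℝ) ^ (-(2 * (j : ℤ)))) ψ
            ((2 : ℝ) ^ j * ξ + l) ((2 : ℝ) ^ j * η)‖ ^ 2) ∧
      (∫ ξ : ℝ, ‖weylKernel ((2 : ℝ) ^ (-(2 * (j : ℤ)))) ψ
          ((2 : ℝ) ^ j * ξ + l) ((2 : ℝ) ^ j * η)‖ ^ 2)
        = (2 : ℝ) ^ (-(j : ℤ)) *
            ∫ ξ : ℝ, ‖weylKernel ((2 : ℝ) ^ (-(2 * (j : ℤ)))) ψ ξ ((2 : ℝ) ^ j * η)‖ ^ 2 := by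
  have hla : (2 : ℝ) ^ (-(2 * (j : ℤ))) * ((2 : ℝ) ^ j) ^ 2 = 1 := by
    rw [← zpow_natCast, ← zpow_natCast, ← zpow_mul, ← zpow_add₀ two_ne_zero]
    norm_num [mul_comm]
  have hinv : |((2 : ℝ) ^ j)⁻¹| = (2 : ℝ) ^ (-(j : ℤ)) := by
    rw [abs_of_pos (by positivity), zpow_neg, zpow_natCast]
  refine Filter.Eventually.of_forall fun η => ⟨?_, ?_⟩
  · simp_rw [norm_weylKernel_dilate_twistedTranslate hla]
  · rw [integral_comp_mul_add_real (fun ξ => ‖weylKernel _ ψ ξ _‖ ^ 2), hinv, smul_eq_mul]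

/-- For `ψ ∈ L¹(ℝ²) ∩ L²(ℝ²)`, `j ≥ 0` and `k, l ∈ ℤ`, for a.e. `η ∈ ℝ`,
`∫_ℝ |K_{D_{2^j} (T^t_{(k,l)})^{2^{-2j}} ψ}(ξ, η)|² dξ = ∫_ℝ |K^{2^{-2j}}_ψ(2^j ξ + l, 2^j η)|² dξ
  = 2^{-j} ∫_ℝ |K^{2^{-2j}}_ψ(ξ, 2^j η)|² dξ`. -/
theorem statement_11 (ψ : ℝ × ℝ → ℂ) (hψ1 : Integrable ψ (volume : Measure (ℝ × ℝ)))
    (hψ2 : MemLp ψ 2 (volume : Measure (ℝ × ℝ))) (j : ℕ) (k l : ℤ) :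
    ∀ᵐ η : ℝ,
      (∫ ξ : ℝ, ‖weylKernel 1
          (dilate ((2 : ℝ) ^ j) (twistedTranslate ((2 : ℝ) ^ (-(2 * (j : ℤ)))) k l ψ)) ξ η‖ ^ 2)
        = (∫ ξ : ℝ, ‖weylKernel ((2 : ℝ) ^ (-(2 * (j : ℤ)))) ψ
            ((2 : ℝ) ^ j * ξ + l) ((2 : ℝ) ^ j * η)‖ ^ 2) ∧
      (∫ ξ : ℝ, ‖weylKernel ((2 : ℝ) ^ (-(2 * (j : ℤ)))) ψ
          ((2 : ℝ) ^ j * ξ + l) ((2 : ℝ) ^ j * η)‖ ^ 2)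
        = (2 : ℝ) ^ (-(j : ℤ)) *
            ∫ ξ : ℝ, ‖weylKernel ((2 : ℝ) ^ (-(2 * (j : ℤ)))) ψ ξ ((2 : ℝ) ^ j * η)‖ ^ 2 :=
  statement_11_general ψ j k l
end
end

section
/- Let φ ∈ L¹(ℝ²) ∩ L²(ℝ²), let λ ∈ ℝ∖{0}, let j ∈ ℤ, and let k, l ∈ ℤ. Then the kernel of the Weyl transform of the dilated twisted translate satisfies K^λ_{D_{2^j} (T^t_{(2k,l)})^{λ 2^{-2j}} φ}(ξ, η) = e^{2πi λ 2^{-2j} k (2^{j+1} ξ + l)} K^{λ 2^{-2j}}_φ(2^j ξ + l, 2^j η) for all ξ, η ∈ ℝ. -/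
/-!
Both operators act on the kernel by a change of variables in its defining integral: `u = a x`
for the dilation, `x = u + k` for the twisted translation. With `a = 2^j` the dilation turns
`λ` into `λ 2^{-2j}`, which is exactly the twist parameter of the translation, so the two
substitutions compose.
-/

open MeasureTheory Complex

noncomputable section

theorem weylKernel_dilate (lam a : ℝ) (ha : 0 < a) (g : ℝ × ℝ → ℂ) (ξ η : ℝ) :
    weylKernel lam (dilate a g) ξ η = weylKernel (lam / a ^ 2) g (a * ξ) (a * η) := by
  set F : ℝ → ℂ := fun u => g (u, a * η - a * ξ) *
    Complex.exp (↑(Real.pi * (lam / a ^ 2) * u * (a * η + a * ξ)) * I)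
  have hpoint : ∀ x : ℝ, (a : ℂ) * g (a * x, a * (η - ξ)) *
      Complex.exp (↑(Real.pi * lam * x * (η + ξ)) * I) = a * F (a * x) := fun x => by
    simp only [F, mul_assoc]
    congr 3
    · rw [mul_sub]
    · field_simp
  simp only [weylKernel, dilate, hpoint, integral_const_mul, Measure.integral_comp_mul_left F a,
    abs_of_pos (inv_pos.mpr ha), Complex.real_smul, Complex.ofReal_inv,
    mul_inv_cancel_left₀ (Complex.ofReal_ne_zero.mpr ha.ne')]
  rfl

theorem weylKernel_twistedTranslate (lam : ℝ) (k l : ℤ) (g : ℝ × ℝ → ℂ) (ξ η : ℝ) :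
    weylKernel lam (twistedTranslate lam k l g) ξ η =
      Complex.exp (↑(Real.pi * lam * k * (2 * ξ + l)) * I) * weylKernel lam g (ξ + l) η := by
  set F : ℝ → ℂ := fun x => twistedTranslate lam k l g (x, η - ξ) *
    Complex.exp (↑(Real.pi * lam * x * (η + ξ)) * I)
  have hpoint : ∀ u : ℝ, F (u + k) = Complex.exp (↑(Real.pi * lam * k * (2 * ξ + l)) * I) *
      (g (u, η - (ξ + l)) * Complex.exp (↑(Real.pi * lam * u * (η + (ξ + l))) * I)) := fun u => by
    have hphase : Complex.exp (↑(Real.pi * lam * k * (2 * ξ + l)) * I) *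
        Complex.exp (↑(Real.pi * lam * u * (η + (ξ + l))) * I) =
        Complex.exp (↑(Real.pi * lam * ((u + k) * l - (η - ξ) * k)) * I) *
        Complex.exp (↑(Real.pi * lam * (u + k) * (η + ξ)) * I) := by
      rw [← Complex.exp_add, ← Complex.exp_add]
      congr 1
      push_cast
      ring
    simp only [F, twistedTranslate, add_sub_cancel_right, ← sub_sub]
    linear_combination g (u, η - ξ - l) * hphase.symm
  rw [weylKernel, ← integral_add_right_eq_self F (k : ℝ)]
  simp only [hpoint, integral_const_mul]
  rfl

theorem statement_14_general (φ : ℝ × ℝ → ℂ) (lam : ℝ) (j k l : ℤ)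
    (ξ η : ℝ) :
    weylKernel lam (dilate ((2 : ℝ) ^ j)
        (twistedTranslate (lam * (2 : ℝ) ^ (-(2 * j))) (2 * k) l φ)) ξ η =
      Complex.exp ((↑(2 * Real.pi * lam * (2 : ℝ) ^ (-(2 * j)) * (k : ℝ) *
          ((2 : ℝ) ^ (j + 1) * ξ + l)) : ℂ) * Complex.I) *
        weylKernel (lam * (2 : ℝ) ^ (-(2 * j))) φ ((2 : ℝ) ^ j * ξ + l) ((2 : ℝ) ^ j * η) := by
  have ha : (0 : ℝ) < 2 ^ j := by positivity
  have hscale : lam / ((2 : ℝ) ^ j) ^ 2 = lam * 2 ^ (-(2 * j)) := by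
    rw [div_eq_mul_inv, ← zpow_natCast, ← zpow_mul, ← zpow_neg, mul_comm j]
    norm_num
  rw [weylKernel_dilate _ _ ha, hscale, weylKernel_twistedTranslate]
  congr 2
  rw [zpow_add_one₀ two_ne_zero]
  push_cast
  ring

/-- For `φ ∈ L¹(ℝ²) ∩ L²(ℝ²)`, `λ ≠ 0`, `j ∈ ℤ` and `k, l ∈ ℤ`,
`K^λ_{D_{2^j} (T^t_{(2k,l)})^{λ2^{-2j}} φ}(ξ, η)
  = e^{2πiλ2^{-2j}k(2^{j+1}ξ + l)} K^{λ2^{-2j}}_φ(2^j ξ + l, 2^j η)` for all `ξ, η ∈ ℝ`. -/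
theorem statement_14 (φ : ℝ × ℝ → ℂ) (hφ1 : Integrable φ (volume : Measure (ℝ × ℝ)))
    (hφ2 : MemLp φ 2 (volume : Measure (ℝ × ℝ))) (lam : ℝ) (hlam : lam ≠ 0) (j k l : ℤ)
    (ξ η : ℝ) :
    weylKernel lam (dilate ((2 : ℝ) ^ j)
        (twistedTranslate (lam * (2 : ℝ) ^ (-(2 * j))) (2 * k) l φ)) ξ η =
      Complex.exp ((↑(2 * Real.pi * lam * (2 : ℝ) ^ (-(2 * j)) * (k : ℝ) *
          ((2 : ℝ) ^ (j + 1) * ξ + l)) : ℂ) * Complex.I) *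
        weylKernel (lam * (2 : ℝ) ^ (-(2 * j))) φ ((2 : ℝ) ^ j * ξ + l) ((2 : ℝ) ^ j * η) :=
  statement_14_general φ lam j k l ξ η
end
end
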